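/- arXiv:1104.2029 — 5 statements merged into one kernel-verified Lean document; each statement's English description precedes it below -/
import Mathlib

section
/- Let R be a quadratic semigroup algebra over a field K with n generators given by d relations, where d ≤ (n²+n)/4. Then R is infinite dimensional as a K-vector space. -/
noncomputable section

/-- The monomial in the free algebra `K⟨X⟩ = MonoidAlgebra K (FreeMonoid X)`
corresponding to a word `w`. -/
def mOfW (K : Type*) [Field K] {X : Type*} (w : FreeMonoid X) :
    MonoidAlgebra K (FreeMonoid X) :=
  MonoidAlgebra.single w 1

/-- The degree-`m` monomial `u_1 u_2 ⋯ u_m`. -/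
def mOf (K : Type*) [Field K] {X : Type*} {m : ℕ} (u : Fin m → X) :
    MonoidAlgebra K (FreeMonoid X) :=
  mOfW K (FreeMonoid.ofList (List.ofFn u))

/-- The degree-2 monomial `ab`. -/
def m2 (K : Type*) [Field K] {X : Type*} (a b : X) :
    MonoidAlgebra K (FreeMonoid X) :=
  mOfW K (FreeMonoid.of a * FreeMonoid.of b)

/-- The support of an element of `K⟨X⟩`: the set of words occurring with
nonzero coefficient. -/
def suppOf {K X : Type*} [Field K] (f : MonoidAlgebra K (FreeMonoid X)) :
    Finset (FreeMonoid X) :=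
  Finsupp.support f.coeff

/-- The two-sided ideal generated by a set `s` in a `K`-algebra, viewed as the
`K`-submodule spanned by all products `p * a * q` with `a ∈ s`. -/
def idealSpan (K : Type*) [Field K] {A : Type*} [Ring A] [Algebra K A]
    (s : Set A) : Submodule K A :=
  Submodule.span K {x | ∃ p q : A, ∃ a ∈ s, x = p * a * q}

/-- `M` is a Quasierhöhungssystem (QHS) on the totally ordered set `X`. -/
def IsQHS (K : Type*) [Field K] {X : Type*} [LinearOrder X]
    (M : Set (MonoidAlgebra K (FreeMonoid X))) : Prop :=
  M.PairwiseDisjoint (fun g => (suppOf g : Set (FreeMonoid X))) ∧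
  (⋃ g ∈ M, (suppOf g : Set (FreeMonoid X))) =
    {w | ∃ a b : X, b ≤ a ∧ w = FreeMonoid.of a * FreeMonoid.of b} ∧
  ∀ g ∈ M,
    (∃ a b : X, b ≤ a ∧ g = m2 K a b) ∨
    (∃ a b c d : X, d ≤ c ∧ c < b ∧ b ≤ a ∧ g = m2 K a b - m2 K c d) ∨
    (∃ a b d : X, d < b ∧ b < a ∧ g = m2 K a b - m2 K b d)

/-- The maximal element `b = max X`. -/
def topEl (X : Type*) [Fintype X] [LinearOrder X] [Nonempty X] : X :=
  Finset.univ.max' Finset.univ_nonempty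

/-- The minimal element `a = min X`. -/
def botEl (X : Type*) [Fintype X] [LinearOrder X] [Nonempty X] : X :=
  Finset.univ.min' Finset.univ_nonempty

/-- The ideal `I_M`, generated by `M' = M \ {ba}` where `a = min X`, `b = max X`. -/
def qhsIdeal (K : Type*) [Field K] {X : Type*} [Fintype X] [LinearOrder X] [Nonempty X]
    (M : Set (MonoidAlgebra K (FreeMonoid X))) :
    Submodule K (MonoidAlgebra K (FreeMonoid X)) :=
  idealSpan K (M \ {m2 K (topEl X) (botEl X)})

/-- The right-to-left lexicographical strict order on degree-`m` monomials. -/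
def rlLt {X : Type*} [LinearOrder X] {m : ℕ} (u v : Fin m → X) : Prop :=
  ∃ j : Fin m, u j < v j ∧ ∀ l : Fin m, j < l → u l = v l

/-- The monomial `u` is minimal with respect to the QHS `M`. -/
def MinimalMon (K : Type*) [Field K] {X : Type*} [Fintype X] [LinearOrder X] [Nonempty X]
    (M : Set (MonoidAlgebra K (FreeMonoid X))) {m : ℕ} (u : Fin m → X) : Prop :=
  mOf K u ∉ qhsIdeal K M ∧
    ∀ v : Fin m → X, mOf K u - mOf K v ∈ qhsIdeal K M → u = v ∨ rlLt u v

/-- The monomial `u` is tame with respect to the QHS `M`. -/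
def TameMon (K : Type*) [Field K] {X : Type*} [Fintype X] [LinearOrder X] [Nonempty X]
    (M : Set (MonoidAlgebra K (FreeMonoid X))) {m : ℕ} (u : Fin m → X) : Prop :=
  MinimalMon K M u ∧ ∃ v : Fin m → X, ∃ j : Fin m,
    mOf K u - mOf K v ∈ qhsIdeal K M ∧ v j = topEl X ∧ ∀ l : Fin m, j < l → v l = u l

/-- The monomial `u` is singular with respect to the QHS `M`: minimal and not tame. -/
def SingularMon (K : Type*) [Field K] {X : Type*} [Fintype X] [LinearOrder X] [Nonempty X]
    (M : Set (MonoidAlgebra K (FreeMonoid X))) {m : ℕ} (u : Fin m → X) : Prop :=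
  MinimalMon K M u ∧ ¬ TameMon K M u

/-- The QHS `M` is regular: for some positive `m` there are no singular monomials
of degree `m`. -/
def RegularQHS (K : Type*) [Field K] {X : Type*} [Fintype X] [LinearOrder X] [Nonempty X]
    (M : Set (MonoidAlgebra K (FreeMonoid X))) : Prop :=
  ∃ m : ℕ, 0 < m ∧ ∀ u : Fin m → X, ¬ SingularMon K M u

/-- `e ∈ X` is pure with respect to `M`: whenever `ab - ce ∈ M`,
one has `a ≥ b > c ≥ e`. -/
def PureEl (K : Type*) [Field K] {X : Type*} [LinearOrder X]
    (M : Set (MonoidAlgebra K (FreeMonoid X))) (e : X) : Prop :=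
  ∀ a b c : X, m2 K a b - m2 K c e ∈ M → e ≤ c ∧ c < b ∧ b ≤ a

/-!
If some relation is a monomial, the relations involve at most `2d - 1 < n(n+1)/2` distinct
words, so some unordered pair `{a, b}` (possibly `a = b`) has neither `ab` nor `ba` among them.
Summing the coefficients of the words of length `m` in which no two adjacent letters form a
word of a relation is then a linear form vanishing on the ideal, and it takes the value `1`
on the alternating word `abab⋯` of length `m` and `0` on those of other lengths. If all
relations are binomials, the ideal is homogeneous and summing the coefficients of all words
of length `m` already does this for the words `aᵐ`. Either way, the quotient contains an
infinite linearly independent family.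
-/

theorem Submodule.not_finite_quotient_of_biorthogonal {K V ι : Type*} [Field K]
    [AddCommGroup V] [Module K V] [Infinite ι] [DecidableEq ι] (N : Submodule K V)
    (v : ι → V) (φ : ι → V →ₗ[K] K) (hN : ∀ i, N ≤ LinearMap.ker (φ i))
    (hφv : ∀ i j, φ i (v j) = if i = j then 1 else 0) :
    ¬ Module.Finite K (V ⧸ N) := by
  intro _
  have hcomp : (LinearMap.pi fun i => N.liftQ (φ i) (hN i)) ∘ N.mkQ ∘ v =
      fun j => Pi.single j (1 : K) := by
    ext j i
    simp [hφv, Pi.single_apply]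
  exact Module.Finite.not_linearIndependent_of_infinite (N.mkQ ∘ v)
    (.of_comp _ (hcomp ▸ Pi.linearIndependent_single_one ι K))

theorem exists_notMem_and_swap_notMem {α β : Type*} [Fintype α] {f : α → α → β}
    (hf : Function.Injective2 f) (T : Finset β) (hT : T.card < Fintype.card (Sym2 α)) :
    ∃ a b, f a b ∉ T ∧ f b a ∉ T := by
  classical
  by_contra! h
  let S := Finset.univ.filter fun p : α × α => f p.1 p.2 ∈ T
  have hS : (Finset.univ : Finset (Sym2 α)) ⊆ S.image fun p => s(p.1, p.2) := by
    rintro z -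
    induction z using Sym2.ind with
    | h a b =>
      by_cases hab : f a b ∈ T
      · exact Finset.mem_image.mpr ⟨(a, b), by simp [S, hab], rfl⟩
      · exact Finset.mem_image.mpr ⟨(b, a), by simp [S, h a b hab], Sym2.eq_swap⟩
  have : Fintype.card (Sym2 α) ≤ T.card :=
    calc Fintype.card (Sym2 α) ≤ (S.image fun p => s(p.1, p.2)).card := Finset.card_le_card hS
      _ ≤ S.card := Finset.card_image_le
      _ ≤ T.card := Finset.card_le_card_of_injOn (fun p => f p.1 p.2)
          (fun p hp => (Finset.mem_filter.mp hp).2)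
          fun p _ q _ hpq => Prod.ext_iff.mpr (hf hpq)
  omega

theorem FreeMonoid.injective2_of_mul_of {X : Type*} :
    Function.Injective2 fun a b : X => FreeMonoid.of a * FreeMonoid.of b := by
  intro a b a' b' h
  simpa using congrArg FreeMonoid.toList h

section Alternating

variable {X : Type*}

def alternatingList (a b : X) : ℕ → List X
  | 0 => []
  | k + 1 => a :: alternatingList b a k

theorem length_alternatingList (a b : X) (k : ℕ) : (alternatingList a b k).length = k := by
  induction k generalizing a b <;> simp [alternatingList, *]

theorem isChain_alternatingList {R : X → X → Prop} {a b : X} (hab : R a b) (hba : R b a)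
    (k : ℕ) : (alternatingList a b k).IsChain R := by
  induction k generalizing a b with
  | zero => simp [alternatingList]
  | succ k ih =>
    rw [alternatingList, List.isChain_cons]
    refine ⟨fun y hy => ?_, ih hba hab⟩
    cases k <;> simp_all [alternatingList]

end Alternating

section FreeAlgebra

variable {K X : Type*} [Field K]

variable (K) in
open Classical in
def coeffSum (P : FreeMonoid X → Prop) : MonoidAlgebra K (FreeMonoid X) →ₗ[K] K :=
  Finsupp.linearCombination K (fun w => if P w then (1 : K) else 0) ∘ₗ
    (MonoidAlgebra.coeffLinearEquiv K).toLinearMap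

open Classical in
theorem coeffSum_mOfW (P : FreeMonoid X → Prop) (w : FreeMonoid X) :
    coeffSum K P (mOfW K w) = if P w then 1 else 0 := by
  simp [coeffSum, mOfW, MonoidAlgebra.coeff_single]

open Classical in
theorem coeffSum_single_mul_mOfW_mul (P : FreeMonoid X → Prop) (u x v : FreeMonoid X) :
    coeffSum K P (MonoidAlgebra.single u 1 * mOfW K x * MonoidAlgebra.single v 1) =
      if P (u * x * v) then 1 else 0 := by
  rw [mOfW, MonoidAlgebra.single_mul_single, MonoidAlgebra.single_mul_single, one_mul, one_mul,
    ← mOfW, coeffSum_mOfW]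

theorem idealSpan_le_ker {M W : Type*} [Monoid M] [AddCommGroup W] [Module K W]
    {s : Set (MonoidAlgebra K M)} (ψ : MonoidAlgebra K M →ₗ[K] W)
    (h : ∀ r ∈ s, ∀ u v : M, ψ (MonoidAlgebra.single u 1 * r * MonoidAlgebra.single v 1) = 0) :
    idealSpan K s ≤ LinearMap.ker ψ := by
  rw [idealSpan, Submodule.span_le]
  rintro _ ⟨p, q, r, hr, rfl⟩
  rw [SetLike.mem_coe, LinearMap.mem_ker]
  induction p using MonoidAlgebra.induction_linear with
  | zero => simp
  | add p p' hp hp' => simp_all [add_mul]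
  | single u c =>
    induction q using MonoidAlgebra.induction_linear with
    | zero => simp
    | add q q' hq hq' => simp_all [mul_add]
    | single v e =>
      have hsingle : ∀ (w : M) (c : K), MonoidAlgebra.single w c = c • MonoidAlgebra.single w 1 :=
        fun w c => by simp
      rw [hsingle u, hsingle v, smul_mul_assoc, smul_mul_assoc, mul_smul_comm, map_smul,
        map_smul, h r hr u v, smul_zero, smul_zero]

theorem suppOf_mOfW (x : FreeMonoid X) : suppOf (mOfW K x) = {x} := by
  simp [suppOf, mOfW, MonoidAlgebra.coeff_single]

theorem suppOf_mOfW_sub_mOfW [DecidableEq (FreeMonoid X)] {x y : FreeMonoid X} (h : x ≠ y) :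
    suppOf (mOfW K x - mOfW K y) = {x, y} := by
  ext w
  simp only [suppOf, mOfW, MonoidAlgebra.coeff_sub, MonoidAlgebra.coeff_single,
    Finsupp.mem_support_iff, Finsupp.sub_apply, Finset.mem_insert, Finset.mem_singleton]
  by_cases hx : w = x <;> by_cases hy : w = y <;> simp_all

variable (K) in
def IsQuadraticSemigroupRelation (r : MonoidAlgebra K (FreeMonoid X)) : Prop :=
  (∃ a b, r = m2 K a b) ∨ ∃ a b c e, r = m2 K a b - m2 K c e

theorem card_suppOf_le_two {r : MonoidAlgebra K (FreeMonoid X)}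
    (hr : IsQuadraticSemigroupRelation K r) : (suppOf r).card ≤ 2 := by
  classical
  rcases hr with ⟨a, b, rfl⟩ | ⟨a, b, c, e, rfl⟩
  · simp [m2, suppOf_mOfW]
  · by_cases heq : FreeMonoid.of a * FreeMonoid.of b = FreeMonoid.of c * FreeMonoid.of e
    · simp [m2, heq, suppOf]
    · rw [m2, m2, suppOf_mOfW_sub_mOfW heq]
      exact Finset.card_le_two

theorem card_biUnion_suppOf_lt [DecidableEq (FreeMonoid X)] {ι : Type*} [Fintype ι]
    (rel : ι → MonoidAlgebra K (FreeMonoid X))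
    (hrel : ∀ i, IsQuadraticSemigroupRelation K (rel i))
    (hmono : ∃ i a b, rel i = m2 K a b) :
    (Finset.univ.biUnion fun i => suppOf (rel i)).card < 2 * Fintype.card ι := by
  obtain ⟨i₀, a, b, hi₀⟩ := hmono
  calc (Finset.univ.biUnion fun i => suppOf (rel i)).card
      ≤ ∑ i, (suppOf (rel i)).card := Finset.card_biUnion_le
    _ < ∑ _i : ι, 2 :=
      Finset.sum_lt_sum (fun i _ => card_suppOf_le_two (hrel i))
        ⟨i₀, Finset.mem_univ _, by simp [hi₀, m2, suppOf_mOfW]⟩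
    _ = 2 * Fintype.card ι := by simp [mul_comm]

theorem not_finite_quotient_of_homogeneous_binomials [Nonempty X]
    (s : Set (MonoidAlgebra K (FreeMonoid X)))
    (hs : ∀ r ∈ s, ∃ x y : FreeMonoid X, x.length = y.length ∧ r = mOfW K x - mOfW K y) :
    ¬ Module.Finite K (MonoidAlgebra K (FreeMonoid X) ⧸ idealSpan K s) := by
  classical
  obtain ⟨a⟩ := ‹Nonempty X›
  refine (idealSpan K s).not_finite_quotient_of_biorthogonal
    (fun k : ℕ => mOfW K (FreeMonoid.ofList (List.replicate k a)))
    (fun m => coeffSum K fun w => w.length = m) (fun m => idealSpan_le_ker _ ?_) fun m k => ?_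
  · rintro r hr u v
    obtain ⟨x, y, hxy, rfl⟩ := hs r hr
    simp [mul_sub, sub_mul, coeffSum_single_mul_mOfW_mul, FreeMonoid.length_mul, hxy]
  · simp [coeffSum_mOfW, FreeMonoid.length, eq_comm]

theorem not_finite_quotient_of_avoided_pair (s : Set (MonoidAlgebra K (FreeMonoid X)))
    (hs : ∀ r ∈ s, IsQuadraticSemigroupRelation K r) (T : Set (FreeMonoid X))
    (hsT : ∀ r ∈ s, ↑(suppOf r) ⊆ T) {a b : X}
    (hab : FreeMonoid.of a * FreeMonoid.of b ∉ T) (hba : FreeMonoid.of b * FreeMonoid.of a ∉ T) :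
    ¬ Module.Finite K (MonoidAlgebra K (FreeMonoid X) ⧸ idealSpan K s) := by
  classical
  let avoids (w : FreeMonoid X) : Prop :=
    w.toList.IsChain fun x y => FreeMonoid.of x * FreeMonoid.of y ∉ T
  refine (idealSpan K s).not_finite_quotient_of_biorthogonal
    (fun k : ℕ => mOfW K (FreeMonoid.ofList (alternatingList a b k)))
    (fun m => coeffSum K fun w => w.length = m ∧ avoids w) (fun m => idealSpan_le_ker _ ?_)
    fun m k => ?_
  · rintro r hr u v
    have hfactor : ∀ c e, FreeMonoid.of c * FreeMonoid.of e ∈ T →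
        coeffSum K (fun w => w.length = m ∧ avoids w)
          (MonoidAlgebra.single u 1 * m2 K c e * MonoidAlgebra.single v 1) = 0 := by
      intro c e hce
      rw [m2, coeffSum_single_mul_mOfW_mul, if_neg]
      rintro ⟨-, hchain⟩
      exact List.isChain_pair.mp (hchain.infix ⟨u.toList, v.toList, by simp⟩) hce
    rcases hs r hr with ⟨c, e, rfl⟩ | ⟨c, e, c', e', rfl⟩
    · exact hfactor c e (hsT _ hr (by simp [m2, suppOf_mOfW]))
    · by_cases heq : FreeMonoid.of c * FreeMonoid.of e = FreeMonoid.of c' * FreeMonoid.of e'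
      · simp [m2, heq]
      · have hsupp := hsT _ hr
        rw [m2, m2, suppOf_mOfW_sub_mOfW heq] at hsupp
        rw [mul_sub, sub_mul, map_sub, hfactor c e (hsupp (by simp)),
          hfactor c' e' (hsupp (by simp)), sub_zero]
  · have halt : avoids (FreeMonoid.ofList (alternatingList a b k)) :=
      isChain_alternatingList hab hba k
    simp [coeffSum_mOfW, halt, FreeMonoid.length, length_alternatingList, eq_comm]

end FreeAlgebra

/-- **Theorem 1.** A quadratic semigroup algebra with `n` generators given by
`d ≤ (n²+n)/4` relations is infinite dimensional over `K`. -/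
theorem quadratic_semigroup_algebra_infinite_dimensional
    (K : Type*) [Field K] (n d : ℕ) (hn : 0 < n) (hd : 4 * d ≤ n ^ 2 + n)
    (rel : Fin d → MonoidAlgebra K (FreeMonoid (Fin n)))
    (hrel : ∀ i, (∃ a b : Fin n, rel i = m2 K a b) ∨
      ∃ a b c e : Fin n, rel i = m2 K a b - m2 K c e) :
    ¬ Module.Finite K
      (MonoidAlgebra K (FreeMonoid (Fin n)) ⧸ idealSpan K (Set.range rel)) := by
  classical
  by_cases hmono : ∃ i a b, rel i = m2 K a b
  · set T := Finset.univ.biUnion fun i => suppOf (rel i)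
    have hsym2 : Fintype.card (Sym2 (Fin n)) * 2 = n ^ 2 + n := by
      rw [Sym2.card, Fintype.card_fin, ← Nat.add_one_mul_choose_eq, Nat.choose_one_right]
      ring
    have hT : T.card < Fintype.card (Sym2 (Fin n)) := by
      have hTd : T.card < 2 * d := by simpa using card_biUnion_suppOf_lt rel hrel hmono
      omega
    obtain ⟨a, b, hab, hba⟩ := exists_notMem_and_swap_notMem FreeMonoid.injective2_of_mul_of T hT
    refine not_finite_quotient_of_avoided_pair _ (by rintro _ ⟨i, rfl⟩; exact hrel i) T ?_
      (by simpa using hab) (by simpa using hba)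
    rintro _ ⟨i, rfl⟩
    exact Finset.coe_subset.mpr
      (Finset.subset_biUnion_of_mem (fun i => suppOf (rel i)) (Finset.mem_univ i))
  · push Not at hmono
    have : Nonempty (Fin n) := ⟨⟨0, hn⟩⟩
    refine not_finite_quotient_of_homogeneous_binomials _ ?_
    rintro _ ⟨i, rfl⟩
    obtain ⟨a, b, c, e, h⟩ := (hrel i).resolve_left fun ⟨a, b, h⟩ => hmono i a b h
    exact ⟨_, _, by simp [FreeMonoid.length_mul], h⟩
end
end

section
/- Let X be a non-empty set, M a family of homogeneous degree-2 elements of K⟨X⟩, and R = K⟨X⟩/I where I is the two-sided ideal generated by M. If there exist a, b ∈ X such that neither ab nor ba belongs to supp(f) for any f ∈ M, then R is infinite dimensional as a K-vector space. -/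
noncomputable section

/-! The alternating words `abab⋯` of every length have only `ab` and `ba` as factors of
length two, so none of them occurs in a product `p f q` with `f ∈ M`. Hence every element of
the ideal has zero coefficient on all of them, and their classes in the quotient are linearly
independent. -/

open MonoidAlgebra

section Quotient

variable {K G ι : Type*} [Ring K] {N : Submodule K (MonoidAlgebra K G)} {w : ι → G}

theorem linearIndependent_mkQ_single_of_coeff_eq_zero (hw : Function.Injective w)
    (hN : ∀ x ∈ N, ∀ i, x.coeff (w i) = 0) :
    LinearIndependent K fun i => N.mkQ (single (w i) (1 : K)) := by
  classical
  let coeffs : MonoidAlgebra K G →ₗ[K] ι → K :=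
    LinearMap.pi fun i => Finsupp.lapply (w i) ∘ₗ (coeffLinearEquiv K).toLinearMap
  have hker : N ≤ LinearMap.ker coeffs := fun x hx => by
    ext i
    exact hN x hx i
  have hdual : N.liftQ coeffs hker ∘ (fun i => N.mkQ (single (w i) 1)) =
      fun i => Pi.single i 1 := by
    ext i j
    simp [coeffs, coeff_single, Finsupp.single_apply, Pi.single_apply, hw.eq_iff, eq_comm]
  exact .of_comp (N.liftQ coeffs hker) (hdual ▸ Pi.linearIndependent_single_one ι K)

end Quotient

theorem coeff_eq_zero_of_mem_idealSpan {K G : Type*} [Field K] [Monoid G]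
    {M : Set (MonoidAlgebra K G)} {g : G}
    (hg : ∀ f ∈ M, ∀ s ∈ f.coeff.support, ∀ u v : G, u * s * v ≠ g)
    {x : MonoidAlgebra K G} (hx : x ∈ idealSpan K M) : x.coeff g = 0 := by
  classical
  let coeffAt : MonoidAlgebra K G →ₗ[K] K :=
    Finsupp.lapply g ∘ₗ (coeffLinearEquiv K).toLinearMap
  suffices idealSpan K M ≤ LinearMap.ker coeffAt from this hx
  refine Submodule.span_le.2 ?_
  rintro _ ⟨p, q, f, hf, rfl⟩
  show (p * f * q).coeff g = 0
  rw [← Finsupp.notMem_support_iff]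
  intro hmem
  obtain ⟨y, hy, v, -, rfl⟩ := Finset.mem_mul.1 (support_coeff_mul_subset (p * f) q hmem)
  obtain ⟨u, -, s, hs, rfl⟩ := Finset.mem_mul.1 (support_coeff_mul_subset p f hy)
  exact hg f hf s hs u v rfl

section AlternatingWord

variable {X : Type*} (a b : X)

def alternatingWord (n : ℕ) : FreeMonoid X :=
  FreeMonoid.ofList ((List.range n).map fun i => if Even i then a else b)

theorem length_alternatingWord (n : ℕ) : (alternatingWord a b n).length = n := by
  simp [alternatingWord, FreeMonoid.length]

theorem alternatingWord_injective : Function.Injective (alternatingWord a b) := fun m n h => by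
  simpa only [length_alternatingWord] using congrArg FreeMonoid.length h

theorem isChain_toList_alternatingWord (n : ℕ) :
    (alternatingWord a b n).toList.IsChain fun x y => x = a ∧ y = b ∨ x = b ∧ y = a := by
  rw [alternatingWord, FreeMonoid.toList_ofList, List.isChain_map, List.isChain_range]
  intro i _
  by_cases hi : Even i <;> simp [hi, Nat.even_add_one]

variable {a b}

theorem eq_of_mul_mul_eq_alternatingWord {u s v : FreeMonoid X} {n : ℕ}
    (h : u * s * v = alternatingWord a b n) (hs : s.length = 2) :
    s = .of a * .of b ∨ s = .of b * .of a := by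
  obtain ⟨x, y, rfl⟩ := FreeMonoid.length_eq_two.1 hs
  have hinfix : [x, y] <:+: (alternatingWord a b n).toList :=
    ⟨u.toList, v.toList, by rw [← h]; rfl⟩
  rcases List.isChain_pair.1 ((isChain_toList_alternatingWord a b n).infix hinfix) with
    ⟨rfl, rfl⟩ | ⟨rfl, rfl⟩
  · exact .inl rfl
  · exact .inr rfl

end AlternatingWord

theorem infinite_dimensional_of_missing_pair_general
    (K : Type*) [Field K] (X : Type*)
    (M : Set (MonoidAlgebra K (FreeMonoid X)))
    (hdeg : ∀ f ∈ M, ∀ w ∈ suppOf f, (FreeMonoid.toList w).length = 2)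
    (h : ∃ a b : X, ∀ f ∈ M,
      FreeMonoid.of a * FreeMonoid.of b ∉ suppOf f ∧
      FreeMonoid.of b * FreeMonoid.of a ∉ suppOf f) :
    ¬ Module.Finite K (MonoidAlgebra K (FreeMonoid X) ⧸ idealSpan K M) := by
  obtain ⟨a, b, hab⟩ := h
  have hcoeff : ∀ x ∈ idealSpan K M, ∀ n, x.coeff (alternatingWord a b n) = 0 :=
    fun x hx n => coeff_eq_zero_of_mem_idealSpan (fun f hf s hs u v huv => by
      rcases eq_of_mul_mul_eq_alternatingWord huv (hdeg f hf s hs) with rfl | rfl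
      exacts [(hab f hf).1 hs, (hab f hf).2 hs]) hx
  intro _
  exact Module.Finite.not_linearIndependent_of_infinite _
    (linearIndependent_mkQ_single_of_coeff_eq_zero (alternatingWord_injective a b) hcoeff)

/-- **Lemma (SE).** If some `a, b ∈ X` are such that neither `ab` nor `ba` belongs to
the support of any relation, then the quotient algebra is infinite dimensional. -/
theorem infinite_dimensional_of_missing_pair
    (K : Type*) [Field K] (X : Type*) [Nonempty X]
    (M : Set (MonoidAlgebra K (FreeMonoid X)))
    (hdeg : ∀ f ∈ M, ∀ w ∈ suppOf f, (FreeMonoid.toList w).length = 2)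
    (h : ∃ a b : X, ∀ f ∈ M,
      FreeMonoid.of a * FreeMonoid.of b ∉ suppOf f ∧
      FreeMonoid.of b * FreeMonoid.of a ∉ suppOf f) :
    ¬ Module.Finite K (MonoidAlgebra K (FreeMonoid X) ⧸ idealSpan K M) :=
  infinite_dimensional_of_missing_pair_general K X M hdeg h
end
end

section
/- Let X be a non-empty set, M a family of homogeneous degree-2 elements of K⟨X⟩, and R = K⟨X⟩/I where I is the two-sided ideal generated by M. If for every f ∈ M the coefficients of f sum to 0, then R is infinite dimensional as a K-vector space. -/
/-!
Send every generator to the same variable `T`. This is an algebra map `K⟨X⟩ → K[T]` taking a word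
`w` to `T ^ |w|`, so a homogeneous quadratic relation goes to its coefficient sum times `T²`, which
is zero here. Hence the map factors through `K⟨X⟩ / I`, and since `X` is nonempty it is onto the
infinite-dimensional space `K[T]`.
-/

noncomputable section

open Polynomial

section CollapseToPoly

variable (R : Type*) [CommSemiring R] (X : Type*)

def collapseToPoly : MonoidAlgebra R (FreeMonoid X) →ₐ[R] Polynomial R :=
  MonoidAlgebra.lift R (Polynomial R) (FreeMonoid X) (FreeMonoid.lift fun _ => Polynomial.X)

variable {R X}

theorem collapseToPoly_single (w : FreeMonoid X) (c : R) :
    collapseToPoly R X (MonoidAlgebra.single w c) = monomial w.length c := by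
  rw [collapseToPoly, MonoidAlgebra.lift_single, FreeMonoid.lift_apply, List.map_const',
    List.prod_replicate, smul_X_eq_monomial]
  rfl

theorem collapseToPoly_of_forall_length_eq {f : MonoidAlgebra R (FreeMonoid X)} {n : ℕ}
    (hf : ∀ w ∈ f.coeff.support, w.length = n) :
    collapseToPoly R X f = monomial n (∑ w ∈ f.coeff.support, f.coeff w) := by
  rw [collapseToPoly, MonoidAlgebra.lift_apply, Finsupp.sum, map_sum]
  refine Finset.sum_congr rfl fun w hw => ?_
  rw [← hf w hw, ← collapseToPoly_single, collapseToPoly, MonoidAlgebra.lift_single]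

theorem collapseToPoly_surjective [Nonempty X] : Function.Surjective (collapseToPoly R X) := by
  rw [← AlgHom.range_eq_top, eq_top_iff, ← adjoin_X, Algebra.adjoin_le_iff]
  rintro _ rfl
  have hX : collapseToPoly R X (MonoidAlgebra.single (FreeMonoid.of (Classical.arbitrary X)) 1) =
      Polynomial.X := by
    rw [collapseToPoly_single, FreeMonoid.length_of, monomial_one_one_eq_X]
  exact ⟨_, hX⟩

end CollapseToPoly

theorem idealSpan_le_ker_s3 {K A B : Type*} [Field K] [Ring A] [Algebra K A] [Semiring B]
    [Algebra K B] (g : A →ₐ[K] B) {s : Set A} (hs : ∀ a ∈ s, g a = 0) :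
    idealSpan K s ≤ LinearMap.ker g.toLinearMap := by
  rw [idealSpan, Submodule.span_le]
  rintro _ ⟨p, q, a, ha, rfl⟩
  simp [hs a ha]

/-- **Lemma (SE1).** If the coefficients of each relation sum up to `0`, then the
quotient algebra is infinite dimensional. -/
theorem infinite_dimensional_of_coeff_sum_zero
    (K : Type*) [Field K] (X : Type*) [Nonempty X]
    (M : Set (MonoidAlgebra K (FreeMonoid X)))
    (hdeg : ∀ f ∈ M, ∀ w ∈ suppOf f, (FreeMonoid.toList w).length = 2)
    (hsum : ∀ f ∈ M, ∑ w ∈ suppOf f, (f.coeff : FreeMonoid X →₀ K) w = 0) :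
    ¬ Module.Finite K (MonoidAlgebra K (FreeMonoid X) ⧸ idealSpan K M) := by
  intro hfin
  have hM : ∀ f ∈ M, collapseToPoly K X f = 0 := fun f hf => by
    rw [collapseToPoly_of_forall_length_eq (hdeg f hf)]
    exact (congrArg (monomial 2) (hsum f hf)).trans (map_zero _)
  have hle := idealSpan_le_ker_s3 (collapseToPoly K X) hM
  have hquot_surj : Function.Surjective ((idealSpan K M).liftQ _ hle) := by
    rw [← LinearMap.range_eq_top, Submodule.range_liftQ, LinearMap.range_eq_top]
    exact collapseToPoly_surjective
  exact not_finite (Module.Finite.of_surjective _ hquot_surj)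
end
end

section
/- Let X be a finite totally ordered set, M a QHS on X, u = u_1…u_m a degree-m monomial and v a submonomial of u (i.e. v = u_j u_{j+1}…u_k for some 1 ≤ j ≤ k ≤ m). If u is minimal with respect to M then v is minimal, and if u is singular with respect to M then v is singular. -/
noncomputable section

/-!
Write `u = p v s` with `p` and `s` the prefix and suffix of `u` around `v`. Multiplying by `p`
on the left and `s` on the right preserves `I_M`, so a relation `v ≡ w` lifts to `u ≡ p w s`.
Since `p w s` differs from `u` only inside the segment, comparing `u` with `p w s` in the
right-to-left order is the same as comparing `v` with `w`, and a letter `b` in `w` with `w`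
agreeing with `v` above it becomes a letter `b` in `p w s` agreeing with `u` above it. Hence
minimality of `u` passes to `v`, and tameness of `v` passes back to `u`.
-/
def splice {X : Type*} {m l : ℕ} (u : Fin m → X) (j : ℕ) (w : Fin l → X) : Fin m → X :=
  fun k => if h : j ≤ k.val ∧ k.val < j + l then w ⟨k.val - j, by omega⟩ else u k

section Splice

variable {X : Type*} {m l j : ℕ} (u : Fin m → X)

lemma splice_apply_of_not_mem (w : Fin l → X) {k : Fin m} (hk : ¬(j ≤ k.val ∧ k.val < j + l)) :
    splice u j w k = u k :=
  dif_neg hk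

lemma splice_apply_of_mem (w : Fin l → X) {k : Fin m} (hk : j ≤ k.val ∧ k.val < j + l) :
    splice u j w k = w ⟨k.val - j, by omega⟩ :=
  dif_pos hk

lemma splice_apply_add (w : Fin l → X) (i : Fin l) (h : j + i.val < m) :
    splice u j w ⟨j + i.val, h⟩ = w i := by
  simp [splice]

lemma splice_eq_self {v : Fin l → X} (hjl : j + l ≤ m)
    (hv : ∀ i : Fin l, v i = u ⟨j + i.val, by omega⟩) : splice u j v = u := by
  funext k
  by_cases hk : j ≤ k.val ∧ k.val < j + l
  · rw [splice, dif_pos hk, hv]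
    congr 1
    ext
    simp only
    omega
  · exact splice_apply_of_not_mem u v hk

lemma ofFn_splice (hjl : j + l ≤ m) (w : Fin l → X) :
    List.ofFn (splice u j w) =
      (List.ofFn u).take j ++ List.ofFn w ++ (List.ofFn u).drop (j + l) := by
  apply List.ext_getElem
  · simp; omega
  · intro k h₁ h₂
    simp only [List.getElem_append, List.getElem_ofFn, List.length_ofFn, List.length_append,
      List.length_take, List.getElem_take, List.getElem_drop]
    have hj : min j m = j := min_eq_left (by omega)
    unfold splice
    simp only [hj]
    split_ifs <;> first | rfl | (congr 1; ext; simp only; omega) | omega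

lemma splice_injective (hjl : j + l ≤ m) :
    Function.Injective (splice u j : (Fin l → X) → Fin m → X) := by
  intro v w h
  funext i
  rw [← splice_apply_add u v i (show j + i.val < m by omega), h, splice_apply_add]

lemma splice_apply_eq_of_lt {v w : Fin l → X} (i : Fin l) (h : ∀ i', i < i' → w i' = v i')
    (k : Fin m) (hk : j + i.val < k.val) : splice u j w k = splice u j v k := by
  by_cases hk' : j ≤ k.val ∧ k.val < j + l
  · rw [splice_apply_of_mem u w hk', splice_apply_of_mem u v hk']
    exact h _ (by rw [Fin.lt_def]; simp only; omega)
  · rw [splice_apply_of_not_mem u w hk', splice_apply_of_not_mem u v hk']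

lemma rlLt_of_rlLt_splice [LinearOrder X] (hjl : j + l ≤ m) {v w : Fin l → X}
    (h : rlLt (splice u j v) (splice u j w)) : rlLt v w := by
  obtain ⟨k, hlt, habove⟩ := h
  have hk : j ≤ k.val ∧ k.val < j + l := by
    by_contra hk
    rw [splice_apply_of_not_mem u v hk, splice_apply_of_not_mem u w hk] at hlt
    exact lt_irrefl _ hlt
  refine ⟨⟨k.val - j, by omega⟩, ?_, fun i hi => ?_⟩
  · rwa [splice_apply_of_mem u v hk, splice_apply_of_mem u w hk] at hlt
  · have hik : k < ⟨j + i.val, by omega⟩ := by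
      change k.val - j < i.val at hi
      change k.val < j + i.val
      omega
    have := habove _ hik
    rwa [splice_apply_add, splice_apply_add] at this

end Splice

lemma mOfW_mul (K : Type*) [Field K] {X : Type*} (p q : FreeMonoid X) :
    mOfW K (p * q) = mOfW K p * mOfW K q := by
  simp [mOfW, MonoidAlgebra.single_mul_single]

lemma mOf_splice (K : Type*) [Field K] {X : Type*} {m l j : ℕ} (u : Fin m → X)
    (hjl : j + l ≤ m) (w : Fin l → X) :
    mOf K (splice u j w) = mOfW K (FreeMonoid.ofList ((List.ofFn u).take j)) * mOf K w *
      mOfW K (FreeMonoid.ofList ((List.ofFn u).drop (j + l))) := by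
  rw [mOf, ofFn_splice u hjl, FreeMonoid.ofList_append, FreeMonoid.ofList_append, mOfW_mul,
    mOfW_mul, mOf]

lemma mul_mul_mem_idealSpan (K : Type*) [Field K] {A : Type*} [Ring A] [Algebra K A]
    {s : Set A} {x : A} (hx : x ∈ idealSpan K s) (p q : A) : p * x * q ∈ idealSpan K s := by
  induction hx using Submodule.span_induction with
  | mem y hy =>
    obtain ⟨p', q', a, ha, rfl⟩ := hy
    exact Submodule.subset_span ⟨p * p', q' * q, a, ha, by noncomm_ring⟩
  | zero => simp
  | add y z _ _ hy hz => simpa [mul_add, add_mul] using Submodule.add_mem _ hy hz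
  | smul c y _ hy => simpa [mul_smul_comm, smul_mul_assoc] using Submodule.smul_mem _ c hy

section IdealSpan

variable (K : Type*) [Field K] {X : Type*} {m l j : ℕ} (u : Fin m → X)
  {s : Set (MonoidAlgebra K (FreeMonoid X))}

lemma mOf_splice_mem_idealSpan (hjl : j + l ≤ m) {v : Fin l → X}
    (h : mOf K v ∈ idealSpan K s) :
    mOf K (splice u j v) ∈ idealSpan K s := by
  rw [mOf_splice K u hjl]
  exact mul_mul_mem_idealSpan K h _ _

lemma mOf_splice_sub_mem_idealSpan (hjl : j + l ≤ m) {v w : Fin l → X}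
    (h : mOf K v - mOf K w ∈ idealSpan K s) :
    mOf K (splice u j v) - mOf K (splice u j w) ∈ idealSpan K s := by
  rw [mOf_splice K u hjl, mOf_splice K u hjl, ← sub_mul, ← mul_sub]
  exact mul_mul_mem_idealSpan K h _ _

end IdealSpan

section QHS

variable {K : Type*} [Field K] {X : Type*} [Fintype X] [LinearOrder X] [Nonempty X]
  {M : Set (MonoidAlgebra K (FreeMonoid X))} {m l j : ℕ} {u : Fin m → X} {v : Fin l → X}

theorem MinimalMon.of_splice (hjl : j + l ≤ m) (h : MinimalMon K M (splice u j v)) :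
    MinimalMon K M v := by
  refine ⟨fun hv => h.1 (mOf_splice_mem_idealSpan K u hjl hv), fun w hw => ?_⟩
  rcases h.2 _ (mOf_splice_sub_mem_idealSpan K u hjl hw) with heq | hlt
  · exact Or.inl (splice_injective u hjl heq)
  · exact Or.inr (rlLt_of_rlLt_splice u hjl hlt)

theorem tameMon_splice (hjl : j + l ≤ m) (hmin : MinimalMon K M (splice u j v))
    (h : TameMon K M v) : TameMon K M (splice u j v) := by
  obtain ⟨-, w, i, hw, hwi, habove⟩ := h
  refine ⟨hmin, splice u j w, ⟨j + i.val, by omega⟩, mOf_splice_sub_mem_idealSpan K u hjl hw,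
    ?_, fun k hk => splice_apply_eq_of_lt u i habove k hk⟩
  rwa [splice_apply_add]

end QHS

theorem submonomial_minimal_and_singular_general
    (K : Type*) [Field K] (X : Type*) [Fintype X] [LinearOrder X] [Nonempty X]
    (M : Set (MonoidAlgebra K (FreeMonoid X)))
    (m l j : ℕ) (hjl : j + l ≤ m) (u : Fin m → X) (v : Fin l → X)
    (hv : ∀ i : Fin l, v i = u ⟨j + i.val, lt_of_lt_of_le (Nat.add_lt_add_left i.isLt j) hjl⟩) :
    (MinimalMon K M u → MinimalMon K M v) ∧
    (SingularMon K M u → SingularMon K M v) := by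
  rw [← splice_eq_self u hjl hv]
  exact ⟨MinimalMon.of_splice hjl, fun ⟨hmin, hnotTame⟩ =>
    ⟨hmin.of_splice hjl, fun htame => hnotTame (tameMon_splice hjl hmin htame)⟩⟩

/-- **Lemma (subm).** A submonomial of a minimal monomial is minimal and a
submonomial of a singular monomial is singular. -/
theorem submonomial_minimal_and_singular
    (K : Type*) [Field K] (X : Type*) [Fintype X] [LinearOrder X] [Nonempty X]
    (M : Set (MonoidAlgebra K (FreeMonoid X))) (hM : IsQHS K M)
    (m l j : ℕ) (hl : 0 < l) (hjl : j + l ≤ m) (u : Fin m → X) (v : Fin l → X)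
    (hv : ∀ i : Fin l, v i = u ⟨j + i.val, lt_of_lt_of_le (Nat.add_lt_add_left i.isLt j) hjl⟩) :
    (MinimalMon K M u → MinimalMon K M v) ∧
    (SingularMon K M u → SingularMon K M v) :=
  submonomial_minimal_and_singular_general K X M m l j hjl u v hv
end
end

section
/- Let X be a finite totally ordered set, M a QHS on X, and u = u_1…u_m a singular monomial with respect to M. Suppose 1 ≤ k ≤ m and v = v_1…v_k is a degree-k monomial with v − u_1…u_k ∈ I_M. Then there exists a degree-m monomial w = w_1…w_m such that w_m ≥ v_k and u − w ∈ I_M. -/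
noncomputable section

/-!
Starting from `u ≡ v_1 ⋯ v_k u_{k+1} ⋯ u_m`, write `u ≡ P x T (mod I_M)` where `T` is the part of
`u` after position `|P| + 1`, and move the letter `x` one step to the right at a time, keeping a
lower bound for it. At an ascent `x ≤ y` of `x y T'` we continue with `y`. At a descent `x > y` the
word `xy` lies in the support of some `g ∈ M`. If `g = xy`, then either `g = ba`, which makes `u`
tame, or `u ∈ I_M`. If `g = xy - cd` with `d < y`, then `u ≡ P c d T'` is smaller than `u` in the
right-to-left order, contradicting minimality. Hence `g = pq - xy` with `q ≥ x`, and we continue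
with `q`. When `T` is exhausted the last letter is the current one.
-/

section Words

variable {K : Type*} [Field K] {X : Type*}

def mOfL (K : Type*) [Field K] {X : Type*} (L : List X) : MonoidAlgebra K (FreeMonoid X) :=
  mOfW K (FreeMonoid.ofList L)

theorem mOf_eq_mOfL {m : ℕ} (u : Fin m → X) : mOf K u = mOfL K (List.ofFn u) := rfl

theorem mOfL_append (L L' : List X) : mOfL K (L ++ L') = mOfL K L * mOfL K L' := by
  simp [mOfL, mOfW, FreeMonoid.ofList_append, MonoidAlgebra.single_mul_single]

theorem m2_eq_mOfL (a b : X) : m2 K a b = mOfL K [a, b] := by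
  rw [m2, mOfL, show [a, b] = [a] ++ [b] from rfl, FreeMonoid.ofList_append,
    FreeMonoid.ofList_singleton, FreeMonoid.ofList_singleton]

theorem mOfL_append_cons_cons (P T : List X) (a b : X) :
    mOfL K (P ++ a :: b :: T) = mOfL K P * m2 K a b * mOfL K T := by
  rw [m2_eq_mOfL, ← mOfL_append, ← mOfL_append]
  simp

theorem of_mul_of_inj {a b c d : X} :
    FreeMonoid.of a * FreeMonoid.of b = FreeMonoid.of c * FreeMonoid.of d ↔ a = c ∧ b = d := by
  rw [← FreeMonoid.toList.injective.eq_iff]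
  simp

theorem m2_inj {a b c d : X} : m2 K a b = m2 K c d ↔ a = c ∧ b = d := by
  rw [← of_mul_of_inj]
  exact (MonoidAlgebra.single_left_injective one_ne_zero).eq_iff

theorem suppOf_m2 (a b : X) : suppOf (m2 K a b) = {FreeMonoid.of a * FreeMonoid.of b} :=
  Finsupp.support_single _ one_ne_zero

theorem mem_suppOf_m2_sub_m2 {a b c d : X} {w : FreeMonoid X}
    (hw : w ∈ suppOf (m2 K a b - m2 K c d)) :
    w = FreeMonoid.of a * FreeMonoid.of b ∨ w = FreeMonoid.of c * FreeMonoid.of d := by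
  classical
  have := Finsupp.support_sub (by rwa [suppOf, MonoidAlgebra.coeff_sub] at hw)
  rwa [Finset.mem_union, ← suppOf, ← suppOf, suppOf_m2, suppOf_m2, Finset.mem_singleton,
    Finset.mem_singleton] at this

theorem m2_sub_m2_ne_m2 {a b c d : X} (h : (a, b) ≠ (c, d)) (e f : X) :
    m2 K a b - m2 K c d ≠ m2 K e f := by
  intro heq
  have hsupp : ∀ {w}, w ∈ suppOf (m2 K a b - m2 K c d) →
      w = FreeMonoid.of e * FreeMonoid.of f := by
    intro w hw
    rwa [heq, suppOf_m2, Finset.mem_singleton] at hw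
  have hne : FreeMonoid.of a * FreeMonoid.of b ≠ FreeMonoid.of c * FreeMonoid.of d := by
    rwa [Ne, of_mul_of_inj, ← Prod.mk.injEq]
  have hab := hsupp (w := FreeMonoid.of a * FreeMonoid.of b) (by
    simp [suppOf, m2, mOfW, MonoidAlgebra.coeff_sub, hne])
  have hcd := hsupp (w := FreeMonoid.of c * FreeMonoid.of d) (by
    simp [suppOf, m2, mOfW, MonoidAlgebra.coeff_sub, hne.symm])
  exact hne (hab.trans hcd.symm)

end Words

theorem idealSpan_mul_right_mem {K A : Type*} [Field K] [Ring A] [Algebra K A] {s : Set A}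
    {x : A} (hx : x ∈ idealSpan K s) (r : A) : x * r ∈ idealSpan K s := by
  induction hx using Submodule.span_induction with
  | mem x hx =>
    obtain ⟨p, q, a, ha, rfl⟩ := hx
    exact Submodule.subset_span ⟨p, q * r, a, ha, by simp only [mul_assoc]⟩
  | zero => simp
  | add x y _ _ hx hy => simpa [add_mul] using add_mem hx hy
  | smul c x _ hx => simpa [smul_mul_assoc] using Submodule.smul_mem _ c hx

theorem SModEq.mul_right_idealSpan {K A : Type*} [Field K] [Ring A] [Algebra K A] {s : Set A}
    {x y : A} (h : x ≡ y [SMOD idealSpan K s]) (r : A) :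
    x * r ≡ y * r [SMOD idealSpan K s] := by
  rw [SModEq.sub_mem, ← sub_mul]
  exact idealSpan_mul_right_mem (SModEq.sub_mem.mp h) r

section QHS

variable {K : Type*} [Field K] {X : Type*} [LinearOrder X]
  {M : Set (MonoidAlgebra K (FreeMonoid X))}

theorem IsQHS.exists_mem_of_lt (hM : IsQHS K M) {x y : X} (hyx : y < x) :
    m2 K x y ∈ M ∨ (∃ c d, d < y ∧ m2 K x y - m2 K c d ∈ M) ∨
      (∃ p q, x ≤ q ∧ y < q ∧ m2 K p q - m2 K x y ∈ M) := by
  have hxy :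
      FreeMonoid.of x * FreeMonoid.of y ∈ ⋃ g ∈ M, (suppOf g : Set (FreeMonoid X)) := by
    rw [hM.2.1]
    exact ⟨x, y, hyx.le, rfl⟩
  simp only [Set.mem_iUnion, Finset.mem_coe, exists_prop] at hxy
  obtain ⟨g, hgM, hg⟩ := hxy
  rcases hM.2.2 g hgM with
    ⟨a, b, -, rfl⟩ | ⟨a, b, c, d, hdc, hcb, -, rfl⟩ | ⟨a, b, d, hdb, -, rfl⟩
  · rw [suppOf_m2, Finset.mem_singleton, of_mul_of_inj] at hg
    obtain ⟨rfl, rfl⟩ := hg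
    exact .inl hgM
  · rcases mem_suppOf_m2_sub_m2 hg with h | h <;> obtain ⟨rfl, rfl⟩ := of_mul_of_inj.mp h
    · exact .inr (.inl ⟨c, d, hdc.trans_lt hcb, hgM⟩)
    · exact .inr (.inr ⟨a, b, hcb.le, hdc.trans_lt hcb, hgM⟩)
  · rcases mem_suppOf_m2_sub_m2 hg with h | h <;> obtain ⟨rfl, rfl⟩ := of_mul_of_inj.mp h
    · exact .inr (.inl ⟨y, d, hdb, hgM⟩)
    · exact .inr (.inr ⟨a, x, le_rfl, hdb, hgM⟩)

variable [Fintype X] [Nonempty X]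

theorem mem_qhsIdeal {g : MonoidAlgebra K (FreeMonoid X)} (hg : g ∈ M)
    (hne : g ≠ m2 K (topEl X) (botEl X)) (p q : MonoidAlgebra K (FreeMonoid X)) :
    p * g * q ∈ qhsIdeal K M :=
  Submodule.subset_span ⟨p, q, g, ⟨hg, hne⟩, rfl⟩

theorem mOfL_smodEq_of_sub_mem {a b c d : X} (hg : m2 K a b - m2 K c d ∈ M)
    (hne : (a, b) ≠ (c, d)) (P T : List X) :
    mOfL K (P ++ a :: b :: T) ≡ mOfL K (P ++ c :: d :: T) [SMOD qhsIdeal K M] := by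
  rw [SModEq.sub_mem, mOfL_append_cons_cons, mOfL_append_cons_cons, ← sub_mul, ← mul_sub]
  exact mem_qhsIdeal hg (m2_sub_m2_ne_m2 hne _ _) _ _

end QHS

section Positions

variable {X : Type*}

theorem exists_ofFn_eq {m : ℕ} (L : List X) (h : L.length = m) :
    ∃ w : Fin m → X, List.ofFn w = L := by
  subst h
  exact ⟨_, List.ofFn_getElem⟩

theorem length_eq_of_ofFn_eq {m : ℕ} {u : Fin m → X} {L : List X} (h : List.ofFn u = L) :
    L.length = m := by
  rw [← h, List.length_ofFn]

theorem apply_eq_of_ofFn_eq_append_cons {m : ℕ} {u : Fin m → X} {P S : List X} {a : X}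
    (h : List.ofFn u = P ++ a :: S) {j : Fin m} (hj : (j : ℕ) = P.length) : u j = a := by
  rw [← List.getElem_ofFn (f := u) (h := by simp), List.getElem_of_eq h]
  simp [hj]

theorem apply_eq_of_ofFn_eq_append {m : ℕ} {u v : Fin m → X} {P Q S : List X}
    (hu : List.ofFn u = P ++ S) (hv : List.ofFn v = Q ++ S) {l : Fin m}
    (hl : P.length ≤ l) : u l = v l := by
  have hPQ : P.length = Q.length := by
    have := (length_eq_of_ofFn_eq hu).trans (length_eq_of_ofFn_eq hv).symm
    simpa using this
  rw [← List.getElem_ofFn (f := u) (h := by simp), ← List.getElem_ofFn (f := v) (h := by simp),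
    List.getElem_of_eq hu, List.getElem_of_eq hv, List.getElem_append_right hl,
    List.getElem_append_right (hPQ ▸ hl)]
  simp [hPQ]

end Positions

theorem rlLt_asymm {X : Type*} [LinearOrder X] {m : ℕ} {u v : Fin m → X} (h : rlLt u v) :
    ¬ rlLt v u := by
  rintro ⟨j', hj', hafter'⟩
  obtain ⟨j, hj, hafter⟩ := h
  rcases lt_trichotomy j j' with hjj | rfl | hjj
  · exact (hafter j' hjj ▸ hj').false
  · exact hj.asymm hj'
  · exact (hafter' j hjj ▸ hj).false

section Singular

variable {K : Type*} [Field K] {X : Type*} [Fintype X] [LinearOrder X] [Nonempty X]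
  {M : Set (MonoidAlgebra K (FreeMonoid X))} {m : ℕ} {u : Fin m → X}

theorem MinimalMon.not_rlLt (hu : MinimalMon K M u) {v : Fin m → X}
    (h : mOf K u ≡ mOf K v [SMOD qhsIdeal K M]) : ¬ rlLt v u := by
  intro hvu
  rcases hu.2 v (SModEq.sub_mem.mp h) with rfl | huv
  · obtain ⟨j, hj, -⟩ := hvu
    exact hj.false
  · exact rlLt_asymm huv hvu

theorem MinimalMon.not_smodEq_of_lt (hu : MinimalMon K M u) {Q R T : List X} {y d : X}
    (hQ : List.ofFn u = Q ++ y :: T) (hQR : Q.length = R.length) (hdy : d < y) :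
    ¬ mOf K u ≡ mOfL K (R ++ d :: T) [SMOD qhsIdeal K M] := by
  intro h
  obtain ⟨w, hw⟩ := exists_ofFn_eq (m := m) (R ++ d :: T)
    (by simpa [hQR] using length_eq_of_ofFn_eq hQ)
  let j : Fin m := ⟨Q.length, by
    have := length_eq_of_ofFn_eq hQ
    simp only [List.length_append, List.length_cons] at this
    omega⟩
  refine hu.not_rlLt (v := w) (by rwa [mOf_eq_mOfL w, hw]) ⟨j, ?_, fun l hl => ?_⟩
  · rwa [apply_eq_of_ofFn_eq_append_cons hw hQR, apply_eq_of_ofFn_eq_append_cons hQ rfl]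
  · refine apply_eq_of_ofFn_eq_append (P := R ++ [d]) (Q := Q ++ [y]) (by simpa using hw)
      (by simpa using hQ) ?_
    simp only [List.length_append, List.length_singleton, ← hQR]
    exact hl

theorem TameMon.of_smodEq_top (hu : MinimalMon K M u) {P Q T : List X}
    (hQ : List.ofFn u = Q ++ T) (hPQ : P.length + 1 = Q.length)
    (h : mOf K u ≡ mOfL K (P ++ topEl X :: T) [SMOD qhsIdeal K M]) : TameMon K M u := by
  obtain ⟨w, hw⟩ := exists_ofFn_eq (m := m) (P ++ topEl X :: T)
    (by have := length_eq_of_ofFn_eq hQ; simp at this ⊢; omega)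
  let j : Fin m := ⟨P.length, by
    have := length_eq_of_ofFn_eq hQ
    simp only [List.length_append] at this
    omega⟩
  refine ⟨hu, w, j, by rw [mOf_eq_mOfL w, hw]; exact SModEq.sub_mem.mp h,
    apply_eq_of_ofFn_eq_append_cons hw rfl, fun l hl => ?_⟩
  refine apply_eq_of_ofFn_eq_append (P := P ++ [topEl X]) (by simpa using hw) hQ ?_
  simp only [List.length_append, List.length_singleton]
  exact hl

end Singular

theorem SingularMon.exists_smodEq_last_ge {K : Type*} [Field K] {X : Type*} [Fintype X]
    [LinearOrder X] [Nonempty X] {M : Set (MonoidAlgebra K (FreeMonoid X))} (hM : IsQHS K M)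
    {n : ℕ} {u : Fin (n + 1) → X} (hu : SingularMon K M u) {P Q T : List X} {x : X}
    (hQ : List.ofFn u = Q ++ T) (hPQ : P.length + 1 = Q.length)
    (h : mOf K u ≡ mOfL K (P ++ x :: T) [SMOD qhsIdeal K M]) :
    ∃ w : Fin (n + 1) → X,
      x ≤ w (Fin.last n) ∧ mOf K u ≡ mOf K w [SMOD qhsIdeal K M] := by
  induction T generalizing P Q x with
  | nil =>
    obtain ⟨w, hw⟩ := exists_ofFn_eq (m := n + 1) (P ++ [x])
      (by simpa [hPQ] using length_eq_of_ofFn_eq hQ)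
    refine ⟨w, (apply_eq_of_ofFn_eq_append_cons hw ?_).ge, by rwa [mOf_eq_mOfL w, hw]⟩
    have := length_eq_of_ofFn_eq hQ
    simp only [List.length_append, List.length_nil] at this
    simp only [Fin.val_last]
    omega
  | cons y T ih =>
    have hQy : List.ofFn u = (Q ++ [y]) ++ T := by simpa using hQ
    have hPQy : (P ++ [x]).length + 1 = (Q ++ [y]).length := by simpa using hPQ
    rcases le_or_gt x y with hxy | hyx
    · obtain ⟨w, hw, hcong⟩ := ih hQy hPQy (by simpa using h)
      exact ⟨w, hxy.trans hw, hcong⟩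
    rcases hM.exists_mem_of_lt hyx with hg | ⟨c, d, hdy, hg⟩ | ⟨p, q, hxq, hyq, hg⟩
    · by_cases htop : m2 K x y = m2 K (topEl X) (botEl X)
      · obtain ⟨rfl, -⟩ := m2_inj.mp htop
        exact (hu.2 (TameMon.of_smodEq_top hu.1 hQ hPQ h)).elim
      · refine (hu.1.1 ?_).elim
        have hmon := mem_qhsIdeal hg htop (mOfL K P) (mOfL K T)
        rw [← mOfL_append_cons_cons] at hmon
        simpa using add_mem (SModEq.sub_mem.mp h) hmon
    · have hne : (x, y) ≠ (c, d) := fun he => hdy.ne (Prod.ext_iff.mp he).2.symm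
      refine (hu.1.not_smodEq_of_lt (R := P ++ [c]) hQ (by simpa using hPQ.symm) hdy ?_).elim
      simpa using h.trans (mOfL_smodEq_of_sub_mem hg hne P T)
    · have hne : (p, q) ≠ (x, y) := fun he => hyq.ne (Prod.ext_iff.mp he).2.symm
      obtain ⟨w, hw, hcong⟩ := ih (P := P ++ [p]) (x := q) hQy (by simpa using hPQ)
        (by simpa using h.trans (mOfL_smodEq_of_sub_mem hg hne P T).symm)
      exact ⟨w, hxq.trans hw, hcong⟩

/-- **Lemma (sing).** If `u = u_1 … u_m` is singular, `1 ≤ k ≤ m` and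
`v = v_1 … v_k` satisfies `v = u_1 … u_k (mod I_M)`, then there is a degree-`m`
monomial `w` with `w_m ≥ v_k` and `u = w (mod I_M)`. -/
theorem singular_last_letter_replacement
    (K : Type*) [Field K] (X : Type*) [Fintype X] [LinearOrder X] [Nonempty X]
    (M : Set (MonoidAlgebra K (FreeMonoid X))) (hM : IsQHS K M)
    (m k : ℕ) (hk1 : 1 ≤ k) (hk : k ≤ m) (u : Fin m → X)
    (hu : SingularMon K M u) (v : Fin k → X)
    (hv : mOf K v - mOf K (fun i : Fin k => u (Fin.castLE hk i)) ∈ qhsIdeal K M) :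
    ∃ w : Fin m → X,
      v ⟨k - 1, by omega⟩ ≤ w ⟨m - 1, by omega⟩ ∧
      mOf K u - mOf K w ∈ qhsIdeal K M := by
  obtain ⟨n, rfl⟩ : ∃ n, m = n + 1 := ⟨m - 1, by omega⟩
  obtain ⟨k, rfl⟩ : ∃ k', k = k' + 1 := ⟨k - 1, by omega⟩
  have hsplit : List.ofFn u =
      List.ofFn (fun i => u (Fin.castLE hk i)) ++ (List.ofFn u).drop (k + 1) :=
    (Fin.ofFn_take_eq_take_ofFn hk u ▸ List.take_append_drop (k + 1) (List.ofFn u)).symm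
  have hv' : List.ofFn v = List.ofFn (Fin.init v) ++ [v (Fin.last k)] := by
    rw [List.ofFn_succ', List.concat_eq_append]; rfl
  have hcong : mOf K u ≡ mOfL K (List.ofFn (Fin.init v) ++ v (Fin.last k) ::
      (List.ofFn u).drop (k + 1)) [SMOD qhsIdeal K M] := by
    have := (SModEq.sub_mem.mpr hv).symm.mul_right_idealSpan (mOfL K ((List.ofFn u).drop (k + 1)))
    rwa [mOf_eq_mOfL, mOf_eq_mOfL, ← mOfL_append, ← mOfL_append, ← hsplit, hv',
      List.append_assoc] at this
  obtain ⟨w, hw, hcong'⟩ := hu.exists_smodEq_last_ge hM hsplit (by simp) hcong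
  exact ⟨w, hw, SModEq.sub_mem.mp hcong'⟩
end
end
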